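/- Let a, s, d be non-negative integers such that s ≤ a, s ≤ d, and a+s+d+1 is not divisible by 3. Then there exists a unique (3, a+s+d+1)-Dyck path Π with area(Π) = a, skips(Π) = s, and dinv(Π) = d. -/

import Mathlib

open MvPolynomial

/-- An `(m,n)`-Dyck path: a north/east lattice path from `(0,0)` to `(m,n)` staying
weakly above the diagonal `y = (n/m)x`.  Such a path is encoded by recording, for each
of the `m` columns (indexed `0,…,m-1` from left to right), the number of cells of that
column lying above the path; this gives an antitone sequence, and the diagonal
condition for the east step in column `i` reads `m * c i ≤ n * (m - 1 - i)`. -/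
def DyckPath (m n : ℕ) : Type :=
  {c : Fin m → Fin (n + 1) //
    (∀ i j : Fin m, i ≤ j → (c j : ℕ) ≤ (c i : ℕ)) ∧
      ∀ i : Fin m, m * (c i : ℕ) ≤ n * (m - 1 - (i : ℕ))}

noncomputable instance instFintypeDyckPath (m n : ℕ) : Fintype (DyckPath m n) := by
  classical
  unfold DyckPath
  infer_instance

namespace DyckPath

variable {m n : ℕ}

/-- `λ(Π)`, the set of cells of the `m × n` lattice lying above the path `Π`.
The cell `(i, j)` (with `i : Fin m`, `j : Fin n`) is the cell in column `i + 1`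
(from the left) and row `j + 1` (from the bottom) in the paper's 1-based indexing. -/
def cellsAbove (P : DyckPath m n) : Set (Fin m × Fin n) :=
  {x | n - (P.1 x.1 : ℕ) ≤ (x.2 : ℕ)}

/-- `arm(x)`: the number of cells of `λ(Π)` strictly east of `x` (in the row of `x`). -/
noncomputable def arm (P : DyckPath m n) (x : Fin m × Fin n) : ℕ :=
  {y ∈ P.cellsAbove | x.1 < y.1 ∧ y.2 = x.2}.ncard

/-- `leg(x)`: the number of cells of `λ(Π)` strictly south of `x` (in the column of `x`). -/
noncomputable def leg (P : DyckPath m n) (x : Fin m × Fin n) : ℕ :=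
  {y ∈ P.cellsAbove | y.1 = x.1 ∧ y.2 < x.2}.ncard

end DyckPath

/-- The dinv condition `arm/(leg+1) < m/n < (arm+1)/leg` for a cell with given arm `a`
and leg `l`, the right inequality being interpreted as true when `l = 0`. -/
def dinvCond (m n a l : ℕ) : Prop :=
  (a : ℚ) / ((l : ℚ) + 1) < (m : ℚ) / (n : ℚ) ∧
    (l = 0 ∨ (m : ℚ) / (n : ℚ) < ((a : ℚ) + 1) / (l : ℚ))

namespace DyckPath

variable {m n : ℕ}

/-- `dinv(Π)`: the number of cells `x ∈ λ(Π)` with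
`arm(x)/(leg(x)+1) < m/n < (arm(x)+1)/leg(x)`. -/
noncomputable def dinv (P : DyckPath m n) : ℕ :=
  {x ∈ P.cellsAbove | dinvCond m n (P.arm x) (P.leg x)}.ncard

/-- `area(Π)`: the number of cells of the lattice lying entirely between the path and
the diagonal, i.e. cells lying entirely weakly above the diagonal `y = (n/m)x` and
below the path. -/
noncomputable def area (P : DyckPath m n) : ℕ :=
  {x : Fin m × Fin n | n * ((x.1 : ℕ) + 1) ≤ m * (x.2 : ℕ) ∧ x ∉ P.cellsAbove}.ncard

end DyckPath

/-- The `(m,n)`-rational `q,t`-Catalan polynomial `C_{m,n}(q,t)`, with `q = X 0` and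
`t = X 1`:  `C_{m,n}(q,t) = Σ_Π q^{dinv(Π)} t^{area(Π)}` over all `(m,n)`-Dyck paths. -/
noncomputable def ratCatalan (m n : ℕ) : MvPolynomial (Fin 2) ℤ :=
  ∑ P : DyckPath m n, X 0 ^ P.dinv * X 1 ^ P.area

/-- The rank of the cell `(i, j)` of the `3 × n` lattice: in the paper's 1-based
coordinates `(a, b) = (i+1, j+1)`, this is `R(a,b) = -a·n + 3(b-1)`. -/
def cellRank (n : ℕ) (x : Fin 3 × Fin n) : ℤ :=
  3 * (x.2 : ℤ) - ((x.1 : ℤ) + 1) * (n : ℤ)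

/-- The set of positive ranks of the `3 × n` lattice: these, in increasing order, are
the entries of the rank word. -/
def posRank (n : ℕ) : Set ℤ :=
  {r | 0 < r ∧ ∃ x : Fin 3 × Fin n, cellRank n x = r}

/-- The set of marked ranks of a `(3,n)`-Dyck path: the ranks of the cells above
the path. -/
def markedRank {n : ℕ} (P : DyckPath 3 n) : Set ℤ :=
  cellRank n '' P.cellsAbove

/-- `skips(Π)`: the number of skips of `Π`, i.e. of maximal blocks of consecutive
unmarked entries of the rank word of `Π` having at least one marked entry to the left
and at least one marked entry to the right.  Each such block is counted through its
rightmost entry `r`: `r` is an unmarked entry, some marked entry lies to its left, and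
the next entry of the rank word after `r` is marked. -/
noncomputable def DyckPath.skips {n : ℕ} (P : DyckPath 3 n) : ℕ :=
  {r : ℤ | r ∈ posRank n ∧ r ∉ markedRank P ∧
    (∃ l ∈ markedRank P, l < r) ∧
    ∃ s ∈ markedRank P, r < s ∧ ∀ t ∈ posRank n, r < t → s ≤ t}.ncard

/-!
A `(3,n)`-Dyck path is determined by the numbers `c₀ ≥ c₁` of cells above it in its first two
columns (the third column has none). Counting column by column,
`area = n - 1 - (c₀ + c₁)` and `dinv = c₁ + min (c₀ - c₁) (⌊n/3⌋ + 1) + min c₁ (c₀ - ⌊n/3⌋)`.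
Since `3 ∤ n`, a positive rank is the rank of exactly one cell, so the rank word can be read
off the lattice: the first column contributes `min c₁ (⌊n/3⌋ + c₁ - c₀)` skips and the second
`c₀ - c₁ - (⌊n/3⌋ + 1)`, whence `area + skips + dinv = n - 1`. The theorem is thus the statement
that `(c₀, c₁) ↦ (area, dinv)` is injective, with the stated triples in its image, which is
linear arithmetic.
-/

theorem Set.ncard_setOf_prod {ι α : Type*} [Fintype ι] [Finite α] (p : ι × α → Prop) :
    {x | p x}.ncard = ∑ i, {a | p (i, a)}.ncard := by
  classical
  have := Fintype.ofFinite α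
  simp only [Set.ncard_eq_toFinset_card', Set.toFinset_ofPred, Finset.card_filter,
    Fintype.sum_prod_type]

theorem Fin.ncard_setOf_Ico_or_Ico {n A B C D : ℕ} {p : Fin n → Prop} (hB : B ≤ n)
    (hBC : B ≤ C) (hD : D ≤ n)
    (h : ∀ j : Fin n, p j ↔ A ≤ j ∧ (j : ℕ) < B ∨ C ≤ j ∧ (j : ℕ) < D) :
    {j | p j}.ncard = B - A + (D - C) := by
  have himage : Fin.val '' {j | p j} = Set.Ico A B ∪ Set.Ico C D := by
    ext j
    simp only [Set.mem_image, Set.mem_ofPred_eq, Set.mem_union, Set.mem_Ico, h]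
    exact ⟨fun ⟨j, hj, hjv⟩ => hjv ▸ hj, fun hj => ⟨⟨j, by omega⟩, hj, rfl⟩⟩
  have hdisj : Disjoint (Set.Ico A B) (Set.Ico C D) :=
    Set.disjoint_left.2 fun j h₁ h₂ => by simp only [Set.mem_Ico] at h₁ h₂; omega
  rw [← Set.ncard_image_of_injective _ Fin.val_injective, himage,
    Set.ncard_union_eq hdisj, Set.ncard_Ico_nat, Set.ncard_Ico_nat]

theorem Fin.ncard_setOf_Ico {n A B : ℕ} {p : Fin n → Prop} (hB : B ≤ n)
    (h : ∀ j : Fin n, p j ↔ A ≤ j ∧ (j : ℕ) < B) : {j | p j}.ncard = B - A := by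
  simpa using Fin.ncard_setOf_Ico_or_Ico (C := B) (D := B) hB le_rfl hB (by simp [h])

theorem dinvCond_iff {m n a l : ℕ} (hn : 0 < n) :
    dinvCond m n a l ↔ a * n < m * (l + 1) ∧ (l = 0 ∨ m * l < n * (a + 1)) := by
  have hn' : (0 : ℚ) < n := by exact_mod_cast hn
  unfold dinvCond
  rw [div_lt_div_iff₀ (by positivity) hn']
  refine and_congr (by norm_cast) (or_congr_right' fun hl => ?_)
  have hl' : (0 : ℚ) < l := by exact_mod_cast Nat.pos_of_ne_zero hl
  rw [div_lt_div_iff₀ hn' hl', mul_comm (n : ℕ)]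
  norm_cast

namespace DyckPath

variable {m n : ℕ}

def col (P : DyckPath m n) (i : Fin m) : ℕ := P.1 i

theorem mk_mem_cellsAbove_iff {P : DyckPath m n} {i : Fin m} {j : Fin n} :
    (i, j) ∈ P.cellsAbove ↔ n - P.col i ≤ j := Iff.rfl

theorem leg_eq (P : DyckPath m n) (i : Fin m) (j : Fin n) :
    P.leg (i, j) = j - (n - P.col i) := by
  have hset : {y ∈ P.cellsAbove | y.1 = i ∧ y.2 < j} =
      Prod.mk i '' {j' : Fin n | n - P.col i ≤ j' ∧ (j' : ℕ) < j} := by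
    ext ⟨i', j'⟩
    simp only [Set.mem_ofPred_eq, Set.mem_image, Prod.mk.injEq, mk_mem_cellsAbove_iff,
      Fin.lt_def]
    constructor
    · rintro ⟨ha, rfl, hlt⟩
      exact ⟨j', ⟨ha, hlt⟩, rfl, rfl⟩
    · rintro ⟨j'', ⟨ha, hlt⟩, rfl, rfl⟩
      exact ⟨ha, rfl, hlt⟩
  rw [leg, hset, Set.ncard_image_of_injective _ (Prod.mk_right_injective i),
    Fin.ncard_setOf_Ico (A := min (n - P.col i) j) j.isLt.le fun j' => by omega]
  omega

theorem arm_eq (P : DyckPath m n) (i : Fin m) (j : Fin n) :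
    P.arm (i, j) = ∑ i', if i < i' ∧ n - P.col i' ≤ j then 1 else 0 := by
  classical
  have hset : {y ∈ P.cellsAbove | i < y.1 ∧ y.2 = j} =
      (·, j) '' {i' : Fin m | i < i' ∧ n - P.col i' ≤ j} := by
    ext ⟨i', j'⟩
    simp only [Set.mem_ofPred_eq, Set.mem_image, Prod.mk.injEq, mk_mem_cellsAbove_iff]
    constructor
    · rintro ⟨ha, hlt, rfl⟩
      exact ⟨i', ⟨hlt, ha⟩, rfl, rfl⟩
    · rintro ⟨i'', ⟨hlt, ha⟩, rfl, rfl⟩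
      exact ⟨ha, hlt, rfl⟩
  rw [arm, hset, Set.ncard_image_of_injective _ (Prod.mk_left_injective j),
    Set.ncard_eq_toFinset_card', Set.toFinset_ofPred, Finset.card_filter]

theorem col_bounds (P : DyckPath 3 n) :
    P.col 2 = 0 ∧ P.col 1 ≤ P.col 0 ∧ 3 * P.col 1 ≤ n ∧ 3 * P.col 0 ≤ 2 * n :=
  ⟨by simpa [col] using P.2.2 2, P.2.1 0 1 (by decide), by simpa [col] using P.2.2 1,
    by simpa [col, mul_comm] using P.2.2 0⟩

def ofCols (c₀ c₁ : ℕ) (h₁₀ : c₁ ≤ c₀) (h₁ : 3 * c₁ ≤ n) (h₀ : 3 * c₀ ≤ 2 * n) :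
    DyckPath 3 n :=
  ⟨![⟨c₀, by omega⟩, ⟨c₁, by omega⟩, 0], by
    refine ⟨fun i j hij => ?_, fun i => ?_⟩
    · fin_cases i <;> fin_cases j <;> simp_all [Fin.le_def]
    · fin_cases i <;>
        simp only [Fin.zero_eta, Fin.mk_one, Fin.reduceFinMk, Matrix.cons_val_zero,
          Matrix.cons_val_one, Matrix.cons_val, Fin.val_zero] <;> omega⟩

@[simp]
theorem ofCols_col_zero {c₀ c₁ : ℕ} (h₁₀ : c₁ ≤ c₀) (h₁ : 3 * c₁ ≤ n) (h₀ : 3 * c₀ ≤ 2 * n) :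
    (ofCols c₀ c₁ h₁₀ h₁ h₀).col 0 = c₀ := rfl

@[simp]
theorem ofCols_col_one {c₀ c₁ : ℕ} (h₁₀ : c₁ ≤ c₀) (h₁ : 3 * c₁ ≤ n) (h₀ : 3 * c₀ ≤ 2 * n) :
    (ofCols c₀ c₁ h₁₀ h₁ h₀).col 1 = c₁ := rfl

theorem ext_col {P Q : DyckPath 3 n} (h₀ : P.col 0 = Q.col 0) (h₁ : P.col 1 = Q.col 1) :
    P = Q := by
  refine Subtype.ext (funext fun i => Fin.ext ?_)
  fin_cases i
  · exact h₀
  · exact h₁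
  · exact P.col_bounds.1.trans Q.col_bounds.1.symm

section Statistics

variable (P : DyckPath 3 n)

theorem area_eq (hn : ¬ 3 ∣ n) : P.area = n - 1 - (P.col 0 + P.col 1) := by
  have := P.col_bounds
  rw [area, Set.ncard_setOf_prod, Fin.sum_univ_three,
    Fin.ncard_setOf_Ico (A := n / 3 + 1) (B := n - P.col 0) (by omega)
      fun j => by simp only [mk_mem_cellsAbove_iff, Fin.val_zero]; omega,
    Fin.ncard_setOf_Ico (A := n - n / 3) (B := n - P.col 1) (by omega)
      fun j => by simp only [mk_mem_cellsAbove_iff, Fin.val_one]; omega,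
    Fin.ncard_setOf_Ico (A := 0) (B := 0) (by omega)
      fun j => by simp only [mk_mem_cellsAbove_iff, Fin.val_two]; omega]
  omega

theorem arm_zero (j : Fin n) : P.arm (0, j) = if n - P.col 1 ≤ j then 1 else 0 := by
  have := P.col_bounds
  rw [arm_eq, Fin.sum_univ_three]
  split_ifs <;> omega

theorem arm_one (j : Fin n) : P.arm (1, j) = 0 := by
  have := P.col_bounds
  rw [arm_eq, Fin.sum_univ_three]
  split_ifs <;> omega

theorem dinv_eq (hn : ¬ 3 ∣ n) :
    P.dinv = P.col 1 + min (P.col 0 - P.col 1) (n / 3 + 1) + min (P.col 1) (P.col 0 - n / 3) := by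
  have := P.col_bounds
  have hn₀ : 0 < n := by omega
  rw [dinv, Set.ncard_setOf_prod, Fin.sum_univ_three,
    Fin.ncard_setOf_Ico_or_Ico (A := n - P.col 0)
      (B := min (n - P.col 1) (n - P.col 0 + n / 3 + 1))
      (C := max (n - P.col 1) (n - P.col 0 + n / 3)) (D := n) (by omega) (by omega) le_rfl
      fun j => by
        rw [mk_mem_cellsAbove_iff, arm_zero, leg_eq, dinvCond_iff hn₀]
        split_ifs <;> omega,
    Fin.ncard_setOf_Ico (A := n - P.col 1) (B := n) le_rfl
      fun j => by rw [mk_mem_cellsAbove_iff, arm_one, leg_eq, dinvCond_iff hn₀]; omega,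
    Fin.ncard_setOf_Ico (A := 0) (B := 0) (by omega)
      fun j => by rw [mk_mem_cellsAbove_iff]; omega]
  omega

end Statistics

end DyckPath

section Rank

variable {n : ℕ}

@[simp] theorem cellRank_zero (j : Fin n) : cellRank n (0, j) = 3 * j - n := by
  simp [cellRank]

@[simp] theorem cellRank_one (j : Fin n) : cellRank n (1, j) = 3 * j - 2 * n := by
  simp [cellRank]

@[simp] theorem cellRank_two (j : Fin n) : cellRank n (2, j) = 3 * j - 3 * n := by
  simp [cellRank]

theorem cellRank_injective (hn : ¬ 3 ∣ n) : Function.Injective (cellRank n) := by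
  rintro ⟨i, j⟩ ⟨i', j'⟩ h
  have hn' : ¬ (3 : ℤ) ∣ n := by exact_mod_cast hn
  fin_cases i <;> fin_cases i' <;>
    simp only [Fin.zero_eta, Fin.mk_one, Fin.reduceFinMk, cellRank_zero, cellRank_one,
      cellRank_two, Prod.mk.injEq, Fin.ext_iff, true_and] at h ⊢ <;> omega

theorem mem_posRank_iff (hn : ¬ 3 ∣ n) {r : ℤ} :
    r ∈ posRank n ↔ 0 < r ∧ (3 ∣ r + n ∧ r ≤ 2 * n - 3 ∨ 3 ∣ r - n ∧ r ≤ n - 3) := by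
  have hn' : ¬ (3 : ℤ) ∣ n := by exact_mod_cast hn
  refine ⟨fun ⟨hr, ⟨i, j⟩, hx⟩ => ⟨hr, ?_⟩, fun ⟨hr, h⟩ => ⟨hr, ?_⟩⟩
  · fin_cases i <;>
      simp only [Fin.zero_eta, Fin.mk_one, Fin.reduceFinMk, cellRank_zero, cellRank_one,
        cellRank_two] at hx <;> omega
  · rcases h with ⟨hd, hle⟩ | ⟨hd, hle⟩
    · exact ⟨(0, ⟨((r + n) / 3).toNat, by omega⟩), by rw [cellRank_zero, Fin.val_mk]; omega⟩
    · exact ⟨(1, ⟨((r + 2 * n) / 3).toNat, by omega⟩), by rw [cellRank_one, Fin.val_mk]; omega⟩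

theorem mem_markedRank_iff (hn : ¬ 3 ∣ n) (P : DyckPath 3 n) {r : ℤ} :
    r ∈ markedRank P ↔ 3 ∣ r + n ∧ 2 * n - 3 * P.col 0 ≤ r ∧ r ≤ 2 * n - 3 ∨
      3 ∣ r - n ∧ n - 3 * P.col 1 ≤ r ∧ r ≤ n - 3 := by
  have := P.col_bounds
  refine ⟨fun ⟨⟨i, j⟩, hx, hr⟩ => ?_, fun h => ?_⟩
  · rw [DyckPath.mk_mem_cellsAbove_iff] at hx
    fin_cases i <;>
      simp only [Fin.zero_eta, Fin.mk_one, Fin.reduceFinMk, cellRank_zero, cellRank_one,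
        cellRank_two] at hr hx <;> omega
  · rcases h with ⟨hd, hlo, hhi⟩ | ⟨hd, hlo, hhi⟩
    · refine ⟨(0, ⟨((r + n) / 3).toNat, by omega⟩), ?_, by rw [cellRank_zero, Fin.val_mk]; omega⟩
      rw [DyckPath.mk_mem_cellsAbove_iff, Fin.val_mk]
      omega
    · refine ⟨(1, ⟨((r + 2 * n) / 3).toNat, by omega⟩), ?_,
        by rw [cellRank_one, Fin.val_mk]; omega⟩
      rw [DyckPath.mk_mem_cellsAbove_iff, Fin.val_mk]
      omega

theorem exists_markedRank_lt_iff (hn : ¬ 3 ∣ n) (P : DyckPath 3 n) {r : ℤ} :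
    (∃ l ∈ markedRank P, l < r) ↔
      0 < P.col 0 ∧ 2 * n - 3 * P.col 0 < r ∨ 0 < P.col 1 ∧ n - 3 * P.col 1 < r := by
  have := P.col_bounds
  refine ⟨fun ⟨l, hl, hlr⟩ => ?_, fun h => ?_⟩
  · rw [mem_markedRank_iff hn] at hl
    omega
  · rcases h with ⟨hc, hr⟩ | ⟨hc, hr⟩
    · exact ⟨_, (mem_markedRank_iff hn P).2
        (Or.inl ⟨⟨n - P.col 0, by ring⟩, le_rfl, by omega⟩), hr⟩
    · exact ⟨_, (mem_markedRank_iff hn P).2 (Or.inr ⟨⟨-P.col 1, by ring⟩, le_rfl, by omega⟩), hr⟩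

/-- The entry following `r` in the rank word. The ranks of the second column are the positive
`r ≤ n - 3` with `r ≡ n (mod 3)`, those of the first column the positive `r ≤ 2n - 3` with
`r ≡ -n (mod 3)`. -/
def nextRank (n : ℕ) (r : ℤ) : ℤ :=
  if 3 ∣ r - n then r + (n % 3 : ℕ)
  else if r + 3 - (n % 3 : ℕ) ≤ n - 3 then r + 3 - (n % 3 : ℕ) else r + 3

theorem isLeast_nextRank (hn : ¬ 3 ∣ n) {r : ℤ} (hr : r ∈ posRank n)
    (htop : r < 2 * n - 3) : IsLeast {t ∈ posRank n | r < t} (nextRank n r) := by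
  rw [mem_posRank_iff hn] at hr
  refine ⟨⟨(mem_posRank_iff hn).2 ?_, ?_⟩, fun t ⟨ht, hrt⟩ => ?_⟩
  · rw [nextRank]
    split_ifs <;> omega
  · rw [nextRank]
    split_ifs <;> omega
  · rw [mem_posRank_iff hn] at ht
    rw [nextRank]
    split_ifs <;> omega

end Rank

namespace DyckPath

variable {n : ℕ} (P : DyckPath 3 n)

def IsSkipEnd (r : ℤ) : Prop :=
  r ∈ posRank n ∧ r ∉ markedRank P ∧ (∃ l ∈ markedRank P, l < r) ∧
    ∃ s ∈ markedRank P, r < s ∧ ∀ t ∈ posRank n, r < t → s ≤ t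

theorem markedRank_subset_posRank (hn : ¬ 3 ∣ n) : markedRank P ⊆ posRank n := by
  rintro _ ⟨x, hx, rfl⟩
  have := (mem_markedRank_iff hn P).1 ⟨x, hx, rfl⟩
  have := P.col_bounds
  exact ⟨by omega, x, rfl⟩

theorem cellRank_mem_markedRank_iff (hn : ¬ 3 ∣ n) {x : Fin 3 × Fin n} :
    cellRank n x ∈ markedRank P ↔ x ∈ P.cellsAbove :=
  (cellRank_injective hn).mem_set_image

theorem exists_markedRank_next_iff (hn : ¬ 3 ∣ n) {r : ℤ} (hr : r ∈ posRank n) :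
    (∃ s ∈ markedRank P, r < s ∧ ∀ t ∈ posRank n, r < t → s ≤ t) ↔
      r < 2 * n - 3 ∧ nextRank n r ∈ markedRank P := by
  constructor
  · rintro ⟨s, hs, hrs, hmin⟩
    have hs' := P.markedRank_subset_posRank hn hs
    have htop : r < 2 * n - 3 := by
      rw [mem_posRank_iff hn] at hs'
      omega
    have hnext := isLeast_nextRank hn hr htop
    obtain rfl : s = nextRank n r :=
      le_antisymm (hmin _ hnext.1.1 hnext.1.2) (hnext.2 ⟨hs', hrs⟩)
    exact ⟨htop, hs⟩
  · rintro ⟨htop, hnext⟩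
    have hleast := isLeast_nextRank hn hr htop
    exact ⟨_, hnext, hleast.1.2, fun t ht hrt => hleast.2 ⟨ht, hrt⟩⟩

theorem isSkipEnd_cellRank_iff (hn : ¬ 3 ∣ n) (x : Fin 3 × Fin n) :
    P.IsSkipEnd (cellRank n x) ↔ 0 < cellRank n x ∧ x ∉ P.cellsAbove ∧
      (∃ l ∈ markedRank P, l < cellRank n x) ∧ cellRank n x < 2 * n - 3 ∧
      nextRank n (cellRank n x) ∈ markedRank P := by
  rw [IsSkipEnd, P.cellRank_mem_markedRank_iff hn]
  constructor
  · rintro ⟨hpos, hx, hl, hs⟩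
    exact ⟨hpos.1, hx, hl, (P.exists_markedRank_next_iff hn hpos).1 hs⟩
  · rintro ⟨hpos, hx, hl, hs⟩
    have hpos' : cellRank n x ∈ posRank n := ⟨hpos, x, rfl⟩
    exact ⟨hpos', hx, hl, (P.exists_markedRank_next_iff hn hpos').2 hs⟩

theorem skips_eq_ncard_cells (hn : ¬ 3 ∣ n) :
    P.skips = {x | P.IsSkipEnd (cellRank n x)}.ncard := by
  have himage : {r | P.IsSkipEnd r} = cellRank n '' {x | P.IsSkipEnd (cellRank n x)} := by
    ext r
    refine ⟨fun hr => ?_, fun ⟨x, hx, hxr⟩ => hxr ▸ hx⟩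
    obtain ⟨x, rfl⟩ := hr.1.2
    exact ⟨x, hr, rfl⟩
  rw [skips, ← Set.ncard_image_of_injective _ (cellRank_injective hn), ← himage]
  rfl

theorem isSkipEnd_cellRank_zero_iff (hn : ¬ 3 ∣ n) (j : Fin n) :
    P.IsSkipEnd (cellRank n (0, j)) ↔ 0 < P.col 1 ∧ n - n / 3 - P.col 1 ≤ j ∧
      (j : ℕ) < n - P.col 0 ∧ (j + n / 3 + 1 < n ∨ j + 1 = n - P.col 0) := by
  have := P.col_bounds
  rw [isSkipEnd_cellRank_iff P hn, exists_markedRank_lt_iff hn, mem_markedRank_iff hn,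
    mk_mem_cellsAbove_iff, cellRank_zero, nextRank]
  split_ifs <;> omega

theorem isSkipEnd_cellRank_one_iff (hn : ¬ 3 ∣ n) (j : Fin n) :
    P.IsSkipEnd (cellRank n (1, j)) ↔ n + n / 3 + 1 - P.col 0 ≤ j ∧ (j : ℕ) < n - P.col 1 := by
  have := P.col_bounds
  rw [isSkipEnd_cellRank_iff P hn, exists_markedRank_lt_iff hn, mem_markedRank_iff hn,
    mk_mem_cellsAbove_iff, cellRank_one, nextRank]
  split_ifs <;> omega

theorem not_isSkipEnd_cellRank_two (hn : ¬ 3 ∣ n) (j : Fin n) :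
    ¬ P.IsSkipEnd (cellRank n (2, j)) := by
  rw [isSkipEnd_cellRank_iff P hn, cellRank_two]
  omega

theorem ncard_isSkipEnd_cellRank_zero (hn : ¬ 3 ∣ n) :
    {j | P.IsSkipEnd (cellRank n (0, j))}.ncard = min (P.col 1) (n / 3 + P.col 1 - P.col 0) := by
  have := P.col_bounds
  rcases Nat.eq_zero_or_pos (P.col 1) with h | h
  · rw [h, Nat.zero_min, Set.ncard_eq_zero]
    exact Set.eq_empty_of_forall_notMem fun j hj => by
      rw [Set.mem_ofPred_eq, P.isSkipEnd_cellRank_zero_iff hn] at hj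
      omega
  · rw [Fin.ncard_setOf_Ico_or_Ico (A := n - n / 3 - P.col 1)
      (B := min (n - P.col 0) (n - n / 3 - 1)) (C := max (n - n / 3 - 1) (n - P.col 0 - 1))
      (D := n - P.col 0) (by omega) (by omega) (by omega)
      fun j => by rw [P.isSkipEnd_cellRank_zero_iff hn]; omega]
    omega

theorem ncard_isSkipEnd_cellRank_one (hn : ¬ 3 ∣ n) :
    {j | P.IsSkipEnd (cellRank n (1, j))}.ncard = P.col 0 - P.col 1 - (n / 3 + 1) := by
  have := P.col_bounds
  rw [Fin.ncard_setOf_Ico (A := n + n / 3 + 1 - P.col 0) (B := n - P.col 1) (by omega)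
    fun j => P.isSkipEnd_cellRank_one_iff hn j]
  omega

theorem skips_eq (hn : ¬ 3 ∣ n) :
    P.skips = min (P.col 1) (n / 3 + P.col 1 - P.col 0) + (P.col 0 - P.col 1 - (n / 3 + 1)) := by
  rw [skips_eq_ncard_cells P hn, Set.ncard_setOf_prod, Fin.sum_univ_three,
    ncard_isSkipEnd_cellRank_zero P hn, ncard_isSkipEnd_cellRank_one P hn,
    Fin.ncard_setOf_Ico (A := 0) (B := 0) (Nat.zero_le n)
      fun j => by simp only [P.not_isSkipEnd_cellRank_two hn, false_iff]; omega,
    Nat.sub_zero, add_zero]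

theorem area_add_skips_add_dinv (hn : ¬ 3 ∣ n) : P.area + P.skips + P.dinv = n - 1 := by
  have := P.col_bounds
  rw [area_eq P hn, skips_eq P hn, dinv_eq P hn]
  omega

theorem eq_of_area_eq_of_dinv_eq (hn : ¬ 3 ∣ n) {P Q : DyckPath 3 n} (harea : P.area = Q.area)
    (hdinv : P.dinv = Q.dinv) : P = Q := by
  have := P.col_bounds
  have := Q.col_bounds
  rw [area_eq P hn, area_eq Q hn] at harea
  rw [dinv_eq P hn, dinv_eq Q hn] at hdinv
  exact ext_col (by omega) (by omega)

theorem exists_area_dinv (a s d : ℕ) (hsa : s ≤ a) (hsd : s ≤ d) (hn : ¬ 3 ∣ a + s + d + 1) :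
    ∃ P : DyckPath 3 (a + s + d + 1), P.area = a ∧ P.dinv = d := by
  set n := a + s + d + 1
  -- one witness for each regime of the two `min`s in `dinv_eq`
  obtain ⟨c₀, c₁, h₁₀, h₁, h₀, hsum, hdinv⟩ : ∃ c₀ c₁, c₁ ≤ c₀ ∧ 3 * c₁ ≤ n ∧ 3 * c₀ ≤ 2 * n ∧
      c₀ + c₁ = s + d ∧ c₁ + min (c₀ - c₁) (n / 3 + 1) + min c₁ (c₀ - n / 3) = d := by
    rcases le_or_gt d (n / 3) with h | h
    · exact ⟨d, s, by omega⟩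
    · rcases Nat.even_or_odd (d - n / 3) with ⟨m, hm⟩ | ⟨m, hm⟩
      · exact ⟨n / 3 + m, s + m, by omega⟩
      · exact ⟨s + n / 3 + 1 + m, m, by omega⟩
  refine ⟨ofCols c₀ c₁ h₁₀ h₁ h₀, ?_, ?_⟩
  · rw [area_eq _ hn, ofCols_col_zero, ofCols_col_one]
    omega
  · rw [dinv_eq _ hn, ofCols_col_zero, ofCols_col_one, hdinv]

end DyckPath

/-- For non-negative integers `a, s, d` with `s ≤ a`, `s ≤ d` and
`3 ∤ a+s+d+1`, there is a unique `(3, a+s+d+1)`-Dyck path with area `a`, skips `s`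
and dinv `d`. -/
theorem existsUnique_dyckPath_of_triple (a s d : ℕ) (hsa : s ≤ a) (hsd : s ≤ d)
    (h3 : ¬ (3 ∣ (a + s + d + 1))) :
    ∃! P : DyckPath 3 (a + s + d + 1), P.area = a ∧ P.skips = s ∧ P.dinv = d := by
  obtain ⟨P, harea, hdinv⟩ := DyckPath.exists_area_dinv a s d hsa hsd h3
  have hskips : P.skips = s := by
    have := P.area_add_skips_add_dinv h3
    omega
  exact ⟨P, ⟨harea, hskips, hdinv⟩, fun Q ⟨hQa, _, hQd⟩ =>
    DyckPath.eq_of_area_eq_of_dinv_eq h3 (hQa.trans harea.symm) (hQd.trans hdinv.symm)⟩
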